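/- Let 𝓗₁, 𝓗₂ be complex Hilbert spaces, H₁, H₂ bounded self-adjoint operators on 𝓗₁, 𝓗₂ respectively, A a bounded self-adjoint operator on 𝓗₂, and I ⊂ ℝ a Borel set. Assume the Mourre estimate χ_I(H₂)·i[H₂,A]·χ_I(H₂) ≥ c·χ_I(H₂) holds for some c > 0, and that the spectral projection χ_I(H₁) is a compact operator. Then for H₀ := H₁ ⊕ H₂ on 𝓗₁ ⊕ 𝓗₂ and 𝐀 := 0 ⊕ A one has χ_I(H₀)·i[H₀,𝐀]·χ_I(H₀) ≥ c·χ_I(H₀) + K with K := −c·(χ_I(H₁) ⊕ 0) compact. -/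

import Mathlib

open Complex

variable {𝓗₁ 𝓗₂ : Type*}
  [NormedAddCommGroup 𝓗₁] [InnerProductSpace ℂ 𝓗₁] [CompleteSpace 𝓗₁]
  [NormedAddCommGroup 𝓗₂] [InnerProductSpace ℂ 𝓗₂] [CompleteSpace 𝓗₂]

/-- The block-diagonal direct sum `T₁ ⊕ T₂` acting on the Hilbert space
`𝓗₁ ⊕ 𝓗₂` (realized as `WithLp 2 (𝓗₁ × 𝓗₂)`). -/
noncomputable def dirSum (T₁ : 𝓗₁ →L[ℂ] 𝓗₁) (T₂ : 𝓗₂ →L[ℂ] 𝓗₂) :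
    WithLp 2 (𝓗₁ × 𝓗₂) →L[ℂ] WithLp 2 (𝓗₁ × 𝓗₂) :=
  ((WithLp.prodContinuousLinearEquiv 2 ℂ 𝓗₁ 𝓗₂).symm : 𝓗₁ × 𝓗₂ →L[ℂ] WithLp 2 (𝓗₁ × 𝓗₂))
    ∘L (T₁.prodMap T₂)
    ∘L ((WithLp.prodContinuousLinearEquiv 2 ℂ 𝓗₁ 𝓗₂) : WithLp 2 (𝓗₁ × 𝓗₂) →L[ℂ] 𝓗₁ × 𝓗₂)

/-- The commutator `i[H,A] = i(HA − AH)` of bounded operators. -/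
noncomputable def commI {𝓗 : Type*} [NormedAddCommGroup 𝓗] [InnerProductSpace ℂ 𝓗]
    (H A : 𝓗 →L[ℂ] 𝓗) : 𝓗 →L[ℂ] 𝓗 :=
  Complex.I • (H ∘L A - A ∘L H)

/-! Everything is block diagonal. Since `𝐀 = 0 ⊕ A`, the commutator `i[H₁ ⊕ H₂, 𝐀]` is
`0 ⊕ i[H₂, A]`, and the perturbed lower bound `c (P₁ ⊕ P₂) − c (P₁ ⊕ 0)` is `0 ⊕ c P₂`. So the
channel `H₁` drops out entirely, leaving `0 ⊕ (P₂ i[H₂, A] P₂ − c P₂)`, which is positive by the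
Mourre estimate for `H₂`; the error term `−c (P₁ ⊕ 0)` is compact because `P₁` is. -/

@[ext]
lemma WithLp.prod_ext {p : ENNReal} {α β : Type*} [AddCommGroup α] [AddCommGroup β]
    {x y : WithLp p (α × β)} (h₁ : x.fst = y.fst) (h₂ : x.snd = y.snd) : x = y :=
  WithLp.ofLp_injective p (Prod.ext h₁ h₂)

@[simp]
lemma commI_zero_right {E : Type*} [NormedAddCommGroup E] [InnerProductSpace ℂ E]
    (H : E →L[ℂ] E) : commI H 0 = 0 := by
  simp [commI]

section DirSum

variable {E₁ E₂ : Type*} [NormedAddCommGroup E₁] [InnerProductSpace ℂ E₁]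
  [NormedAddCommGroup E₂] [InnerProductSpace ℂ E₂]

@[simp]
lemma dirSum_apply_fst (T₁ : E₁ →L[ℂ] E₁) (T₂ : E₂ →L[ℂ] E₂) (x : WithLp 2 (E₁ × E₂)) :
    (dirSum T₁ T₂ x).fst = T₁ x.fst := rfl

@[simp]
lemma dirSum_apply_snd (T₁ : E₁ →L[ℂ] E₁) (T₂ : E₂ →L[ℂ] E₂) (x : WithLp 2 (E₁ × E₂)) :
    (dirSum T₁ T₂ x).snd = T₂ x.snd := rfl

lemma dirSum_add (S₁ T₁ : E₁ →L[ℂ] E₁) (S₂ T₂ : E₂ →L[ℂ] E₂) :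
    dirSum (S₁ + T₁) (S₂ + T₂) = dirSum S₁ S₂ + dirSum T₁ T₂ := by
  ext x <;> simp

lemma dirSum_sub (S₁ T₁ : E₁ →L[ℂ] E₁) (S₂ T₂ : E₂ →L[ℂ] E₂) :
    dirSum (S₁ - T₁) (S₂ - T₂) = dirSum S₁ S₂ - dirSum T₁ T₂ := by
  ext x <;> simp

lemma dirSum_smul (a : ℂ) (T₁ : E₁ →L[ℂ] E₁) (T₂ : E₂ →L[ℂ] E₂) :
    dirSum (a • T₁) (a • T₂) = a • dirSum T₁ T₂ := by
  ext x <;> simp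

lemma dirSum_comp (S₁ T₁ : E₁ →L[ℂ] E₁) (S₂ T₂ : E₂ →L[ℂ] E₂) :
    dirSum S₁ S₂ ∘L dirSum T₁ T₂ = dirSum (S₁ ∘L T₁) (S₂ ∘L T₂) := by
  ext x <;> simp

lemma commI_dirSum (H₁ A₁ : E₁ →L[ℂ] E₁) (H₂ A₂ : E₂ →L[ℂ] E₂) :
    commI (dirSum H₁ H₂) (dirSum A₁ A₂) = dirSum (commI H₁ A₁) (commI H₂ A₂) := by
  simp only [commI, dirSum_comp, ← dirSum_sub, dirSum_smul]

lemma dirSum_isPositive {T₁ : E₁ →L[ℂ] E₁} {T₂ : E₂ →L[ℂ] E₂}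
    (h₁ : T₁.IsPositive) (h₂ : T₂.IsPositive) : (dirSum T₁ T₂).IsPositive := by
  refine ⟨fun x y => ?_, fun x => ?_⟩
  · simp only [ContinuousLinearMap.coe_coe, WithLp.prod_inner_apply, WithLp.ofLp_fst,
      WithLp.ofLp_snd, dirSum_apply_fst, dirSum_apply_snd]
    rw [← T₁.coe_coe, ← T₂.coe_coe, h₁.isSymmetric, h₂.isSymmetric]
  · simp only [ContinuousLinearMap.reApplyInnerSelf, WithLp.prod_inner_apply, WithLp.ofLp_fst,
      WithLp.ofLp_snd, dirSum_apply_fst, dirSum_apply_snd, map_add]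
    exact add_nonneg (h₁.re_inner_nonneg_left _) (h₂.re_inner_nonneg_left _)

lemma isCompactOperator_dirSum {T₁ : E₁ →L[ℂ] E₁} {T₂ : E₂ →L[ℂ] E₂}
    (h₁ : IsCompactOperator T₁) (h₂ : IsCompactOperator T₂) :
    IsCompactOperator (dirSum T₁ T₂) := by
  obtain ⟨K₁, hK₁, hT₁⟩ := h₁
  obtain ⟨K₂, hK₂, hT₂⟩ := h₂
  refine ⟨WithLp.toLp 2 '' K₁ ×ˢ K₂,
    (hK₁.prod hK₂).image (WithLp.prod_continuous_toLp 2 E₁ E₂), ?_⟩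
  have hfst := (WithLp.fstL 2 ℂ E₁ E₂).continuous.continuousAt (x := 0)
    |>.preimage_mem_nhds <| by simpa using hT₁
  have hsnd := (WithLp.sndL 2 ℂ E₁ E₂).continuous.continuousAt (x := 0)
    |>.preimage_mem_nhds <| by simpa using hT₂
  filter_upwards [hfst, hsnd] with x hx₁ hx₂
  exact ⟨(T₁ x.fst, T₂ x.snd), ⟨hx₁, hx₂⟩, rfl⟩

end DirSum

theorem mourre_estimate_direct_sum_general
    (H₁ P₁ : 𝓗₁ →L[ℂ] 𝓗₁) (H₂ A P₂ : 𝓗₂ →L[ℂ] 𝓗₂) (c : ℝ)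
    (hP₁compact : IsCompactOperator P₁)
    (hMourre : (P₂ ∘L commI H₂ A ∘L P₂ - (c : ℂ) • P₂).IsPositive) :
    ((dirSum P₁ P₂) ∘L commI (dirSum H₁ H₂) (dirSum 0 A) ∘L (dirSum P₁ P₂)
        - ((c : ℂ) • dirSum P₁ P₂ + (-(c : ℂ)) • dirSum P₁ 0)).IsPositive
      ∧ IsCompactOperator ((-(c : ℂ)) • dirSum P₁ (0 : 𝓗₂ →L[ℂ] 𝓗₂)) := by
  have hblock : (dirSum P₁ P₂) ∘L commI (dirSum H₁ H₂) (dirSum 0 A) ∘L (dirSum P₁ P₂)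
      - ((c : ℂ) • dirSum P₁ P₂ + (-(c : ℂ)) • dirSum P₁ 0)
      = dirSum 0 (P₂ ∘L commI H₂ A ∘L P₂ - (c : ℂ) • P₂) := by
    rw [commI_dirSum, dirSum_comp, dirSum_comp, ← dirSum_smul, ← dirSum_smul, ← dirSum_add,
      ← dirSum_sub]
    congr 1 <;> simp
  refine ⟨hblock ▸ dirSum_isPositive ContinuousLinearMap.isPositive_zero hMourre, ?_⟩
  rw [FunLike.coe_smul]
  exact (isCompactOperator_dirSum hP₁compact isCompactOperator_zero).smul _

/-- **Mourre estimate for the two-channel Hamiltonian.**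
Let `H₁, H₂` be bounded self-adjoint operators, `A` a bounded self-adjoint operator on
`𝓗₂`, and let `P₁ = χ_I(H₁)`, `P₂ = χ_I(H₂)` be the spectral projections of `H₁, H₂`
onto a Borel set `I` (formalized as orthogonal projections commuting with `H₁`, `H₂`
respectively), with `P₁` compact. If the Mourre estimate
`P₂ · i[H₂,A] · P₂ ≥ c·P₂` holds for some `c > 0`, then for `H₀ := H₁ ⊕ H₂` and
`𝐀 := 0 ⊕ A` one has `(P₁ ⊕ P₂) · i[H₀,𝐀] · (P₁ ⊕ P₂) ≥ c·(P₁ ⊕ P₂) + K` with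
`K := −c·(P₁ ⊕ 0)` compact. -/
theorem mourre_estimate_direct_sum
    (H₁ P₁ : 𝓗₁ →L[ℂ] 𝓗₁) (H₂ A P₂ : 𝓗₂ →L[ℂ] 𝓗₂) (I : Set ℝ) (c : ℝ) (hc : 0 < c)
    (hH₁ : IsSelfAdjoint H₁) (hH₂ : IsSelfAdjoint H₂) (hA : IsSelfAdjoint A)
    (hP₁sa : IsSelfAdjoint P₁) (hP₁idem : P₁ ∘L P₁ = P₁) (hP₁comm : H₁ ∘L P₁ = P₁ ∘L H₁)
    (hP₂sa : IsSelfAdjoint P₂) (hP₂idem : P₂ ∘L P₂ = P₂) (hP₂comm : H₂ ∘L P₂ = P₂ ∘L H₂)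
    (hP₁compact : IsCompactOperator P₁)
    (hMourre : (P₂ ∘L commI H₂ A ∘L P₂ - (c : ℂ) • P₂).IsPositive) :
    ((dirSum P₁ P₂) ∘L commI (dirSum H₁ H₂) (dirSum 0 A) ∘L (dirSum P₁ P₂)
        - ((c : ℂ) • dirSum P₁ P₂ + (-(c : ℂ)) • dirSum P₁ 0)).IsPositive
      ∧ IsCompactOperator ((-(c : ℂ)) • dirSum P₁ (0 : 𝓗₂ →L[ℂ] 𝓗₂)) :=
  mourre_estimate_direct_sum_general H₁ P₁ H₂ A P₂ c hP₁compact hMourre
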